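/- Let C ⊆ R^n be nonempty, closed, convex, and line-free, and for each ν let P^ν be an (ε^ν, δ^ν)-approximation of C with (ε^ν, δ^ν) → (0,0). Then P^ν converges to C in the sense of Painlevé–Kuratowski. -/

import Mathlib

open Metric Set Filter
open scoped ENNReal Pointwise Topology RealInnerProductSpace

noncomputable section

/-- The recession cone of a set `C`. -/
def recc {n : ℕ} (C : Set (EuclideanSpace ℝ (Fin n))) : Set (EuclideanSpace ℝ (Fin n)) :=
  {d | ∀ x ∈ C, ∀ t : ℝ, 0 ≤ t → x + t • d ∈ C}

/-- The excess of `C₁` over `C₂`: `sup_{c₁ ∈ C₁} inf_{c₂ ∈ C₂} ‖c₁ - c₂‖`, valued in `ℝ≥0∞`. -/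
def exc {n : ℕ} (C₁ C₂ : Set (EuclideanSpace ℝ (Fin n))) : ℝ≥0∞ :=
  ⨆ x ∈ C₁, EMetric.infEdist x C₂

/-- The conical hull of a set: all nonnegative multiples of its elements, together with `0`. -/
def coneHull {n : ℕ} (D : Set (EuclideanSpace ℝ (Fin n))) : Set (EuclideanSpace ℝ (Fin n)) :=
  {x | ∃ t : ℝ, 0 ≤ t ∧ ∃ d ∈ convexHull ℝ D, x = t • d}

/-- A polyhedron: `conv V + cone D` for finite sets `V`, `D`. -/
def IsPolyhedron {n : ℕ} (P : Set (EuclideanSpace ℝ (Fin n))) : Prop :=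
  ∃ V D : Set (EuclideanSpace ℝ (Fin n)), V.Finite ∧ D.Finite ∧
    P = convexHull ℝ V + coneHull D

/-- `P` is an `(ε, δ)`-approximation of `C`: `P` is a line-free polyhedron with
(i) `exc(vert P, C) ≤ ε`, (ii) truncated Hausdorff distance between the recession cones
at most `δ`, (iii) `P ⊇ C`. -/
def IsEDApprox {n : ℕ} (P C : Set (EuclideanSpace ℝ (Fin n))) (ε δ : ℝ) : Prop :=
  IsPolyhedron P ∧ (∀ d ∈ recc P, -d ∈ recc P → d = 0) ∧
  exc (Set.extremePoints ℝ P) C ≤ ENNReal.ofReal ε ∧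
  Metric.hausdorffDist (recc P ∩ Metric.closedBall 0 1)
    (recc C ∩ Metric.closedBall 0 1) ≤ δ ∧
  C ⊆ P

/-!
Only the outer limit needs work: the inner limit contains `C` because `C ⊆ P^ν`.
Let `p_k ∈ P^{ν_k}` converge to `x`. By Minkowski's theorem for the line-free polyhedron
`P^{ν_k}`, `p_k = q_k + w_k` with `q_k` a convex combination of vertices, hence `ε`-close to
some `c_k ∈ C`, and `w_k ∈ recc P^{ν_k}`, hence `δ ‖w_k‖`-close to some `z_k ∈ recc C`.
Then `c_k + z_k ∈ C` lies within `o(1) + δ_k ‖w_k‖` of `x`, so if `x ∉ C` we get `‖w_k‖ → ∞`.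
A cluster point `u` of `w_k / ‖w_k‖` is a unit vector in `recc C`, and since `c_k + w_k` stays
bounded, `-u = lim c_k / ‖w_k‖` is in `recc C` as well, contradicting that `C` is line-free.

Minkowski's theorem for `conv V + K` with `K` a salient cone: a point `v ∈ V` that is not
extreme satisfies `v ∈ conv (V \ {v}) + K` (salience excludes the degenerate case), so it can be
dropped from `V` without changing the polyhedron.
-/

section Minkowski

variable {E : Type*} [AddCommGroup E] [Module ℝ E] {K : PointedCone ℝ E}

theorem PointedCone.eq_zero_of_mem_openSegment_add (hK : (K : ConvexCone ℝ E).Salient)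
    {v a b : E} (ha : a ∈ K) (hb : b ∈ K) (h : v ∈ openSegment ℝ (v + a) (v + b)) :
    a = 0 ∧ b = 0 := by
  obtain ⟨s, t, hs, ht, hst, hv⟩ := h
  have hsum : s • a + t • b = 0 := by linear_combination (norm := module) hv - hst • v
  have hsa : s • a = 0 := by
    by_contra hne
    exact hK _ (K.smul_mem hs.le ha) hne (neg_eq_of_add_eq_zero_right hsum ▸ K.smul_mem ht.le hb)
  have htb : t • b = 0 := by simpa [hsa] using hsum
  exact ⟨(smul_eq_zero.1 hsa).resolve_left hs.ne', (smul_eq_zero.1 htb).resolve_left ht.ne'⟩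

theorem mem_convexHull_add_of_notMem_extremePoints (hK : (K : ConvexCone ℝ E).Salient)
    {S : Set E} {v : E} (hv : v ∉ (convexHull ℝ (insert v S) + K).extremePoints ℝ) :
    v ∈ convexHull ℝ S + K := by
  have hvP : v ∈ convexHull ℝ (insert v S) + K :=
    ⟨v, subset_convexHull ℝ _ (mem_insert v S), 0, K.zero_mem, add_zero v⟩
  simp only [mem_extremePoints, hvP, true_and, not_forall] at hv
  obtain ⟨_, ⟨a, ha, ka, hka, rfl⟩, _, ⟨b, hb, kb, hkb, rfl⟩, hvab, hne⟩ := hv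
  rcases S.eq_empty_or_nonempty with rfl | hS
  · rw [insert_empty_eq, convexHull_singleton, mem_singleton_iff] at ha hb
    subst ha hb
    obtain ⟨rfl, rfl⟩ := K.eq_zero_of_mem_openSegment_add hK hka hkb hvab
    simp at hne
  rw [convexHull_insert hS, convexJoin_singleton_left, mem_iUnion₂] at ha hb
  obtain ⟨za, hza, α, α', hα, hα', hαα', rfl⟩ := ha
  obtain ⟨zb, hzb, β, β', hβ, hβ', hββ', rfl⟩ := hb
  obtain ⟨s, t, hs, ht, hst, hv⟩ := hvab
  dsimp only at hv hne
  obtain rfl : α = 1 - α' := by linarith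
  obtain rfl : β = 1 - β' := by linarith
  rcases (by positivity : 0 ≤ s * α' + t * β').eq_or_lt with hσ0 | hσ
  · -- Both endpoints are then of the form `v + k` with `k ∈ K`, and salience forces `k = 0`.
    obtain rfl : α' = 0 := by nlinarith [mul_nonneg hs.le hα', mul_nonneg ht.le hβ']
    obtain rfl : β' = 0 := by nlinarith [mul_nonneg hs.le hα', mul_nonneg ht.le hβ']
    simp only [sub_zero, one_smul, zero_smul, add_zero] at hv hne
    obtain ⟨rfl, rfl⟩ := K.eq_zero_of_mem_openSegment_add hK hka hkb ⟨s, t, hs, ht, hst, hv⟩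
    simp at hne
  · refine ⟨(s * α' / (s * α' + t * β')) • za + (t * β' / (s * α' + t * β')) • zb,
      convex_convexHull ℝ S hza hzb (by positivity) (by positivity) (by field_simp),
      (s * α' + t * β')⁻¹ • (s • ka + t • kb), K.smul_mem (by positivity)
        (K.add_mem (K.smul_mem hs.le hka) (K.smul_mem ht.le hkb)), ?_⟩
    have hσv : (s * α' + t * β') • v = (s * α') • za + (t * β') • zb + (s • ka + t • kb) := by
      linear_combination (norm := module) -hv + hst • v
    rw [← inv_smul_smul₀ hσ.ne' v, hσv]
    module

theorem convexHull_insert_add_eq {S : Set E} {v : E} (hv : v ∈ convexHull ℝ S + K) :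
    convexHull ℝ (insert v S) + K = convexHull ℝ S + K := by
  refine (add_subset_add (convexHull_mono (subset_insert v S)) subset_rfl).antisymm' ?_
  have hconv : convexHull ℝ (insert v S) ⊆ convexHull ℝ S + K :=
    convexHull_min (insert_subset hv ((subset_convexHull ℝ S).trans (subset_add_left _ K.zero_mem)))
      ((convex_convexHull ℝ S).add K.convex)
  calc convexHull ℝ (insert v S) + K ⊆ convexHull ℝ S + K + K := add_subset_add hconv subset_rfl
    _ ⊆ convexHull ℝ S + K := by
      rw [add_assoc]
      exact add_subset_add subset_rfl
        (add_subset_iff.2 fun _ hx _ hy => K.add_mem hx hy)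

theorem subset_convexHull_extremePoints_add (hK : (K : ConvexCone ℝ E).Salient) {V : Set E}
    (hV : V.Finite) :
    convexHull ℝ V + K ⊆ convexHull ℝ ((convexHull ℝ V + K).extremePoints ℝ) + K := by
  classical
  lift V to Finset E using hV
  induction V using Finset.strongInduction with
  | H V ih =>
    by_cases hext : (V : Set E) ⊆ (convexHull ℝ (V : Set E) + K).extremePoints ℝ
    · exact add_subset_add (convexHull_mono hext) subset_rfl
    obtain ⟨v, hvV, hv⟩ := not_subset.1 hext
    have hVv : (V : Set E) = insert v ↑(V.erase v) := by
      rw [← Finset.coe_insert, Finset.insert_erase hvV]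
    rw [hVv] at hv ⊢
    rw [convexHull_insert_add_eq (mem_convexHull_add_of_notMem_extremePoints hK hv)]
    exact ih _ (Finset.erase_ssubset hvV)

end Minkowski

theorem tendsto_atTop_of_le_add_mul {a δ t : ℕ → ℝ} {r : ℝ} (hr : 0 < r)
    (ha : Tendsto a atTop (𝓝 0)) (hδ : Tendsto δ atTop (𝓝 0)) (ht : ∀ k, 0 ≤ t k)
    (h : ∀ k, r ≤ a k + δ k * t k) : Tendsto t atTop atTop := by
  refine tendsto_atTop.2 fun M => ?_
  have hM : 0 < r / 2 / (|M| + 1) := by positivity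
  filter_upwards [ha.eventually (gt_mem_nhds (half_pos hr)), hδ.eventually (gt_mem_nhds hM)]
    with k hak hδk
  by_contra! htM
  have h1 : δ k * t k ≤ r / 2 / (|M| + 1) * t k := mul_le_mul_of_nonneg_right hδk.le (ht k)
  have h2 : r / 2 / (|M| + 1) * t k < r / 2 := by
    rw [div_mul_eq_mul_div, div_lt_iff₀ (by positivity)]
    nlinarith [le_abs_self M]
  linarith [h k]

theorem exists_strictMono_tendsto_of_frequently_inter_nonempty {X : Type*} [TopologicalSpace X]
    {x : X} [(𝓝 x).IsCountablyGenerated] {P : ℕ → Set X}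
    (hx : ∀ U ∈ 𝓝 x, ∃ᶠ ν in atTop, (U ∩ P ν).Nonempty) :
    ∃ φ : ℕ → ℕ, StrictMono φ ∧ ∃ p : ℕ → X, (∀ k, p k ∈ P (φ k)) ∧ Tendsto p atTop (𝓝 x) := by
  obtain ⟨U, hU⟩ := (𝓝 x).exists_antitone_basis
  obtain ⟨φ, hφ, hφU⟩ := extraction_forall_of_frequently fun k => hx (U k) (hU.mem k)
  choose p hpU hpP using hφU
  exact ⟨φ, hφ, p, hpP, hU.tendsto hpU⟩

section Euclidean

variable {n : ℕ}

local notation "𝔼" => EuclideanSpace ℝ (Fin n)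

theorem zero_mem_recc (C : Set 𝔼) : (0 : 𝔼) ∈ recc C :=
  fun x hx _ _ => by simpa using hx

theorem smul_mem_recc {C : Set 𝔼} {d : 𝔼} (hd : d ∈ recc C) {s : ℝ} (hs : 0 ≤ s) :
    s • d ∈ recc C := fun x hx t ht => by
  simpa [mul_smul] using hd x hx (t * s) (mul_nonneg ht hs)

theorem isClosed_recc {C : Set 𝔼} (hC : IsClosed C) : IsClosed (recc C) := by
  have : recc C = ⋂ x ∈ C, ⋂ t ∈ Ici (0 : ℝ), (fun d : 𝔼 => x + t • d) ⁻¹' C := by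
    ext d; simp [recc]
  rw [this]
  exact isClosed_biInter fun x _ => isClosed_biInter fun t _ => hC.preimage (by fun_prop)

theorem mem_recc_of_tendsto_inv_smul {C : Set 𝔼} (hcl : IsClosed C) (hcv : Convex ℝ C)
    {c : ℕ → 𝔼} (hc : ∀ k, c k ∈ C) {t : ℕ → ℝ} (ht : Tendsto t atTop atTop) {d : 𝔼}
    (hd : Tendsto (fun k => (t k)⁻¹ • c k) atTop (𝓝 d)) : d ∈ recc C := by
  intro x hx s hs
  have hmem : ∀ᶠ k in atTop, (1 - s / t k) • x + (s / t k) • c k ∈ C := by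
    filter_upwards [ht.eventually_ge_atTop (max s 1)] with k hk
    have htk : 0 < t k := zero_lt_one.trans_le ((le_max_right s 1).trans hk)
    have hst : s / t k ≤ 1 := (div_le_one htk).2 ((le_max_left s 1).trans hk)
    exact hcv hx (hc k) (by linarith) (div_nonneg hs htk.le) (by ring)
  have hs_div : Tendsto (fun k => s / t k) atTop (𝓝 0) := by
    simpa [div_eq_mul_inv] using ht.inv_tendsto_atTop.const_mul s
  have hlim : Tendsto (fun k => (1 - s / t k) • x + (s / t k) • c k) atTop (𝓝 (x + s • d)) := by
    have hcomb := (((tendsto_const_nhds (x := (1 : ℝ))).sub hs_div).smul_const x).add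
      (hd.const_smul s)
    simp only [sub_zero, one_smul] at hcomb
    refine hcomb.congr fun k => ?_
    rw [smul_smul, div_eq_mul_inv]
  exact hcl.mem_of_tendsto hlim hmem

theorem mem_recc_of_tendsto_inv_smul_of_dist_le {C : Set 𝔼} (hcl : IsClosed C) {t η : ℕ → ℝ}
    {w z : ℕ → 𝔼} (ht : Tendsto t atTop atTop) (hη : Tendsto η atTop (𝓝 0))
    (hz : ∀ k, z k ∈ recc C) (hwz : ∀ k, dist (w k) (z k) ≤ η k * t k) {u : 𝔼}
    (hu : Tendsto (fun k => (t k)⁻¹ • w k) atTop (𝓝 u)) : u ∈ recc C := by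
  have hpos : ∀ᶠ k in atTop, 0 < t k := ht.eventually_gt_atTop 0
  have hzu : Tendsto (fun k => (t k)⁻¹ • z k) atTop (𝓝 u) := by
    refine hu.congr_dist (squeeze_zero' (.of_forall fun _ => dist_nonneg) ?_ hη)
    filter_upwards [hpos] with k hk
    rw [dist_smul₀, Real.norm_of_nonneg (inv_nonneg.2 hk.le), inv_mul_le_iff₀ hk, mul_comm]
    exact hwz k
  exact (isClosed_recc hcl).mem_of_tendsto hzu
    (hpos.mono fun k hk => smul_mem_recc (hz k) (inv_nonneg.2 hk.le))

theorem smul_mem_coneHull {D : Set 𝔼} {x : 𝔼} (hx : x ∈ coneHull D) {s : ℝ} (hs : 0 ≤ s) :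
    s • x ∈ coneHull D := by
  obtain ⟨t, ht, d, hd, rfl⟩ := hx
  exact ⟨s * t, mul_nonneg hs ht, d, hd, (mul_smul s t d).symm⟩

theorem add_mem_coneHull {D : Set 𝔼} {x y : 𝔼} (hx : x ∈ coneHull D) (hy : y ∈ coneHull D) :
    x + y ∈ coneHull D := by
  obtain ⟨t, ht, d, hd, rfl⟩ := hx
  obtain ⟨s, hs, e, he, rfl⟩ := hy
  rcases (add_nonneg ht hs).eq_or_lt with hts | hts
  · obtain rfl : t = 0 := by linarith
    obtain rfl : s = 0 := by linarith
    exact ⟨0, le_rfl, d, hd, by simp⟩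
  refine ⟨t + s, hts.le, (t / (t + s)) • d + (s / (t + s)) • e,
    convex_convexHull ℝ D hd he (by positivity) (by positivity) (by field_simp), ?_⟩
  rw [smul_add, smul_smul, smul_smul, mul_div_cancel₀ _ hts.ne', mul_div_cancel₀ _ hts.ne']

theorem coneHull_subset_recc (V D : Set 𝔼) : coneHull D ⊆ recc (convexHull ℝ V + coneHull D) := by
  rintro d hd _ ⟨q, hq, w, hw, rfl⟩ t ht
  exact ⟨q, hq, w + t • d, add_mem_coneHull hw (smul_mem_coneHull hd ht), (add_assoc _ _ _).symm⟩

def coneHullPointedCone {D : Set 𝔼} (hD : D.Nonempty) : PointedCone ℝ 𝔼 where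
  carrier := coneHull D
  add_mem' := add_mem_coneHull
  zero_mem' := ⟨0, le_rfl, hD.some, subset_convexHull ℝ D hD.some_mem, (zero_smul ℝ _).symm⟩
  smul_mem' c _ hx := smul_mem_coneHull hx c.2

theorem IsPolyhedron.subset_convexHull_extremePoints_add_recc {P : Set 𝔼} (hP : IsPolyhedron P)
    (hlf : ∀ d ∈ recc P, -d ∈ recc P → d = 0) :
    P ⊆ convexHull ℝ (P.extremePoints ℝ) + recc P := by
  obtain ⟨V, D, hV, -, rfl⟩ := hP
  rcases D.eq_empty_or_nonempty with rfl | hD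
  · simp [coneHull]
  have hK : (coneHullPointedCone hD : ConvexCone ℝ 𝔼).Salient := fun d hd hd0 hnd =>
    hd0 (hlf d (coneHull_subset_recc V D hd) (coneHull_subset_recc V D hnd))
  exact (subset_convexHull_extremePoints_add hK hV).trans
    (add_subset_add subset_rfl (coneHull_subset_recc V D))

theorem IsEDApprox.exists_dist_le_of_mem_convexHull {P C : Set 𝔼} {ε δ : ℝ}
    (h : IsEDApprox P C ε δ) (hcl : IsClosed C) (hcv : Convex ℝ C) {q : 𝔼}
    (hq : q ∈ convexHull ℝ (P.extremePoints ℝ)) : ∃ c ∈ C, dist q c ≤ max 0 ε := by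
  have hext : P.extremePoints ℝ ⊆ cthickening ε C := fun y hy => mem_cthickening_iff.2 <|
    (le_iSup₂ (f := fun z (_ : z ∈ P.extremePoints ℝ) => infEDist z C) y hy).trans h.2.2.1
  have hq' : q ∈ cthickening (max 0 ε) C := by
    rw [cthickening_max_zero]
    exact convexHull_min hext (hcv.cthickening ε) hq
  have hne : C.Nonempty := nonempty_iff_ne_empty.2 fun hC => by simp [hC] at hq'
  obtain ⟨c, hc, hqc⟩ := hcl.exists_infDist_eq_dist hne q
  exact ⟨c, hc, hqc ▸ ENNReal.toReal_le_of_le_ofReal (le_max_left 0 ε) (mem_cthickening_iff.1 hq')⟩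

theorem IsEDApprox.exists_mem_recc_dist_le {P C : Set 𝔼} {ε δ : ℝ} (h : IsEDApprox P C ε δ)
    (hcl : IsClosed C) {w : 𝔼} (hw : w ∈ recc P) : ∃ z ∈ recc C, dist w z ≤ δ * ‖w‖ := by
  rcases eq_or_ne w 0 with rfl | hw0
  · exact ⟨0, zero_mem_recc C, by simp⟩
  have hwpos : 0 < ‖w‖ := norm_pos_iff.2 hw0
  have hu : ‖w‖⁻¹ • w ∈ recc P ∩ closedBall 0 1 :=
    ⟨smul_mem_recc hw (inv_nonneg.2 hwpos.le), by simp [norm_smul, hwpos.ne']⟩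
  have hBne : (recc C ∩ closedBall (0 : 𝔼) 1).Nonempty :=
    ⟨0, zero_mem_recc C, mem_closedBall_self zero_le_one⟩
  obtain ⟨z, hzB, hz⟩ := ((isCompact_closedBall 0 1).inter_left
    (isClosed_recc hcl)).exists_infDist_eq_dist hBne (‖w‖⁻¹ • w)
  have hdist : dist (‖w‖⁻¹ • w) z ≤ δ := by
    rw [← hz]
    refine (infDist_le_hausdorffDist_of_mem hu ?_).trans h.2.2.2.1
    exact hausdorffEDist_ne_top_of_nonempty_of_bounded ⟨_, hu⟩ hBne
      (isBounded_closedBall.subset inter_subset_right)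
      (isBounded_closedBall.subset inter_subset_right)
  refine ⟨‖w‖ • z, smul_mem_recc hzB.1 hwpos.le, ?_⟩
  calc dist w (‖w‖ • z) = ‖w‖ * dist (‖w‖⁻¹ • w) z := by
        rw [← Real.norm_of_nonneg hwpos.le, ← dist_smul₀, Real.norm_of_nonneg hwpos.le,
          smul_inv_smul₀ hwpos.ne']
    _ ≤ δ * ‖w‖ := by rw [mul_comm]; exact mul_le_mul_of_nonneg_right hdist hwpos.le

theorem not_tendsto_norm_atTop_of_lineFree {C : Set 𝔼} (hcl : IsClosed C) (hcv : Convex ℝ C)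
    (hpointed : ∀ d ∈ recc C, -d ∈ recc C → d = 0) {c w z : ℕ → 𝔼} {η : ℕ → ℝ}
    (hc : ∀ k, c k ∈ C) (hz : ∀ k, z k ∈ recc C) (hη : Tendsto η atTop (𝓝 0))
    (hwz : ∀ k, dist (w k) (z k) ≤ η k * ‖w k‖)
    (hbdd : IsBoundedUnder (· ≤ ·) atTop fun k => ‖c k + w k‖) :
    ¬ Tendsto (fun k => ‖w k‖) atTop atTop := by
  intro hw
  obtain ⟨u, -, φ, hφ, hu⟩ := (isCompact_closedBall (0 : 𝔼) 1).tendsto_subseq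
    (x := fun k => ‖w k‖⁻¹ • w k) fun k => by
      rw [mem_closedBall_zero_iff, norm_smul, norm_inv, norm_norm]
      exact inv_mul_le_one_of_le₀ le_rfl (norm_nonneg _)
  have ht := hw.comp hφ.tendsto_atTop
  have hunit : ‖u‖ = 1 := by
    refine tendsto_nhds_unique hu.norm (tendsto_const_nhds.congr' ?_)
    filter_upwards [ht.eventually_gt_atTop 0] with j hj
    simp only [Function.comp_apply, norm_smul, norm_inv, norm_norm] at hj ⊢
    exact (inv_mul_cancel₀ hj.ne').symm
  have hu_mem : u ∈ recc C := mem_recc_of_tendsto_inv_smul_of_dist_le hcl ht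
    (hη.comp hφ.tendsto_atTop) (fun j => hz (φ j)) (fun j => hwz (φ j)) hu
  have hneg_mem : -u ∈ recc C := by
    have hcw := (hw.inv_tendsto_atTop.zero_smul_isBoundedUnder_le hbdd).comp hφ.tendsto_atTop
    refine mem_recc_of_tendsto_inv_smul hcl hcv (fun j => hc (φ j)) ht ?_
    simpa [smul_add] using hcw.sub hu
  simp [hpointed u hu_mem hneg_mem] at hunit

theorem mem_of_tendsto_of_isEDApprox {C : Set 𝔼} (hcl : IsClosed C) (hcv : Convex ℝ C)
    (hpointed : ∀ d ∈ recc C, -d ∈ recc C → d = 0) {P : ℕ → Set 𝔼} {ε δ : ℕ → ℝ}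
    (happrox : ∀ k, IsEDApprox (P k) C (ε k) (δ k))
    (hε : Tendsto ε atTop (𝓝 0)) (hδ : Tendsto δ atTop (𝓝 0)) {p : ℕ → 𝔼} (hp : ∀ k, p k ∈ P k)
    {x : 𝔼} (hx : Tendsto p atTop (𝓝 x)) : x ∈ C := by
  choose q hq w hw hqw using fun k => mem_add.1 <|
    (happrox k).1.subset_convexHull_extremePoints_add_recc (happrox k).2.1 (hp k)
  choose c hc hqc using fun k => (happrox k).exists_dist_le_of_mem_convexHull hcl hcv (hq k)
  choose z hz hwz using fun k => (happrox k).exists_mem_recc_dist_le hcl (hw k)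
  have hε' : Tendsto (fun k => max 0 (ε k)) atTop (𝓝 0) := by
    simpa using (tendsto_const_nhds (x := (0 : ℝ))).max hε
  have hcw : Tendsto (fun k => c k + w k) atTop (𝓝 x) := by
    have hcq : Tendsto (fun k => c k - q k) atTop (𝓝 0) :=
      squeeze_zero_norm (fun k => by rw [← dist_eq_norm, dist_comm]; exact hqc k) hε'
    refine (add_zero x ▸ hx.add hcq).congr fun k => ?_
    rw [← hqw k]
    abel
  by_contra hxC
  have hr : 0 < infDist x C := (hcl.notMem_iff_infDist_pos ⟨c 0, hc 0⟩).1 hxC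
  have hnear : ∀ k, infDist x C ≤ (dist (p k) x + max 0 (ε k)) + δ k * ‖w k‖ := fun k => by
    have hczC : c k + z k ∈ C := by simpa using hz k (c k) (hc k) 1 zero_le_one
    calc infDist x C ≤ dist (c k + z k) x := dist_comm x _ ▸ infDist_le_dist_of_mem hczC
      _ ≤ dist (c k + z k) (q k + w k) + dist (p k) x := by rw [hqw k]; exact dist_triangle _ _ _
      _ ≤ (max 0 (ε k) + δ k * ‖w k‖) + dist (p k) x := by
        gcongr
        rw [dist_comm]
        exact (dist_add_add_le _ _ _ _).trans (add_le_add (hqc k) (hwz k))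
      _ = _ := by ring
  have hw_top := tendsto_atTop_of_le_add_mul hr
    (by simpa using (tendsto_iff_dist_tendsto_zero.1 hx).add hε') hδ (fun k => norm_nonneg _) hnear
  exact not_tendsto_norm_atTop_of_lineFree hcl hcv hpointed hc hz hδ hwz
    hcw.norm.isBoundedUnder_le hw_top

end Euclidean

theorem stmt10_general {n : ℕ} (C : Set (EuclideanSpace ℝ (Fin n)))
    (hcl : IsClosed C) (hcv : Convex ℝ C)
    (hpointed : ∀ d ∈ recc C, -d ∈ recc C → d = 0)
    (P : ℕ → Set (EuclideanSpace ℝ (Fin n))) (ε δ : ℕ → ℝ)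
    (happrox : ∀ ν, IsEDApprox (P ν) C (ε ν) (δ ν))
    (hε : Tendsto ε atTop (nhds 0)) (hδ : Tendsto δ atTop (nhds 0)) :
    C = {x | ∀ U ∈ nhds x, ∀ᶠ ν in atTop, (U ∩ P ν).Nonempty} ∧
    C = {x | ∀ U ∈ nhds x, ∃ᶠ ν in atTop, (U ∩ P ν).Nonempty} := by
  have hinner : ∀ x ∈ C, ∀ U ∈ 𝓝 x, ∀ᶠ ν in atTop, (U ∩ P ν).Nonempty := fun x hx U hU =>
    .of_forall fun ν => ⟨x, mem_of_mem_nhds hU, (happrox ν).2.2.2.2 hx⟩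
  have houter : ∀ x, (∀ U ∈ 𝓝 x, ∃ᶠ ν in atTop, (U ∩ P ν).Nonempty) → x ∈ C := fun x hx => by
    obtain ⟨φ, hφ, p, hp, hpx⟩ := exists_strictMono_tendsto_of_frequently_inter_nonempty hx
    exact mem_of_tendsto_of_isEDApprox hcl hcv hpointed (fun k => happrox (φ k))
      (hε.comp hφ.tendsto_atTop) (hδ.comp hφ.tendsto_atTop) hp hpx
  exact ⟨Subset.antisymm (hinner · ·) fun x hx => houter x fun U hU => (hx U hU).frequently,
    Subset.antisymm (fun x hx U hU => (hinner x hx U hU).frequently) houter⟩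

theorem stmt10 {n : ℕ} (C : Set (EuclideanSpace ℝ (Fin n)))
    (hne : C.Nonempty) (hcl : IsClosed C) (hcv : Convex ℝ C)
    (hpointed : ∀ d ∈ recc C, -d ∈ recc C → d = 0)
    (P : ℕ → Set (EuclideanSpace ℝ (Fin n))) (ε δ : ℕ → ℝ)
    (happrox : ∀ ν, IsEDApprox (P ν) C (ε ν) (δ ν))
    (hε : Tendsto ε atTop (nhds 0)) (hδ : Tendsto δ atTop (nhds 0)) :
    C = {x | ∀ U ∈ nhds x, ∀ᶠ ν in atTop, (U ∩ P ν).Nonempty} ∧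
    C = {x | ∀ U ∈ nhds x, ∃ᶠ ν in atTop, (U ∩ P ν).Nonempty} :=
  stmt10_general C hcl hcv hpointed P ε δ happrox hε hδ
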